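/- Let G be a finite simple graph with maximum degree at most 3 and girth at least 8, such that 20·γ(G) ≥ w(G) and every nonempty proper induced subgraph H of G satisfies 20·γ(H) < w(H). Then G contains no sequence (1,3,2), i.e., there is no path of three distinct vertices v, u, x with vu and ux edges of G, deg_G(v) = 1, deg_G(u) = 3, and deg_G(x) = 2. -/

import Mathlib

open Finset

/-- The domination number: minimum size of a dominating set. -/
noncomputable def gamma {V : Type*} [Fintype V] (G : SimpleGraph V) : ℕ :=
  sInf {n | ∃ D : Finset V, D.card = n ∧ ∀ v : V, v ∈ D ∨ ∃ u ∈ D, G.Adj u v}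

/-- The degree of a vertex. -/
noncomputable def gdeg {V : Type*} (G : SimpleGraph V) (v : V) : ℕ :=
  Nat.card (G.neighborSet v)

/-- Weight of a vertex of degree `d` (for graphs of maximum degree at most 3). -/
def wt (d : ℕ) : ℕ :=
  if d = 0 then 20 else if d = 1 then 15 else if d = 2 then 11 else 7

/-- Total weight of a graph: `w(G) = Σ_v w_G(v)`. -/
noncomputable def wsum {V : Type*} [Fintype V] (G : SimpleGraph V) : ℕ :=
  ∑ v : V, wt (gdeg G v)

/-!
Let `y` be the third neighbour of `u` and delete the closed neighbourhood `N[u] = {v, u, x, y}`.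
Adding `u` to a dominating set of what is left dominates `G`, so by minimality the weight drops
by at most `20`. But `N[u]` weighs at least `15 + 7 + 11 + 7 = 40`, and the remaining vertices
only gain `5` per edge leaving `N[u]`, of which there are at most three (one at `x`, two at `y`):
the weight drops by at least `25`.
-/

open SimpleGraph

lemma wt_le_wt_add_of_le {a b : ℕ} (hab : a ≤ b) (hb : b ≤ 3) :
    wt a ≤ wt b + 5 * (b - a) := by
  interval_cases b <;> interval_cases a <;> decide

section Domination

variable {V : Type*} [Fintype V] (G : SimpleGraph V)

lemma gamma_le_card {D : Finset V} (hD : ∀ v, v ∈ D ∨ ∃ u ∈ D, G.Adj u v) : gamma G ≤ #D :=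
  Nat.sInf_le ⟨D, rfl, hD⟩

lemma exists_dominating_card_eq_gamma :
    ∃ D : Finset V, #D = gamma G ∧ ∀ v, v ∈ D ∨ ∃ u ∈ D, G.Adj u v :=
  Nat.sInf_mem (s := {n | ∃ D : Finset V, #D = n ∧ ∀ v, v ∈ D ∨ ∃ u ∈ D, G.Adj u v})
    ⟨_, univ, rfl, fun v => Or.inl (mem_univ v)⟩

lemma gamma_le_gamma_induce_add_card [DecidableEq V] (T A : Finset V)
    (hA : ∀ v ∉ T, v ∈ A ∨ ∃ a ∈ A, G.Adj a v) :
    gamma G ≤ gamma (G.induce (T : Set V)) + #A := by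
  obtain ⟨D, hDcard, hD⟩ := exists_dominating_card_eq_gamma (G.induce (T : Set V))
  calc gamma G ≤ #(D.map (Function.Embedding.subtype _) ∪ A) := gamma_le_card G ?_
    _ ≤ gamma (G.induce (T : Set V)) + #A := (card_union_le _ _).trans (by simp [hDcard])
  intro v
  by_cases hv : v ∈ T
  · exact (hD ⟨v, hv⟩).imp (fun h => mem_union_left _ (mem_map_of_mem _ h))
      fun ⟨a, ha, hadj⟩ => ⟨a, mem_union_left _ (mem_map_of_mem _ ha), hadj⟩
  · exact (hA v hv).imp (mem_union_right _)
      fun ⟨a, ha, hadj⟩ => ⟨a, mem_union_right _ ha, hadj⟩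

lemma wsum_le_wsum_induce_add_of_minimal [DecidableEq V] (hG : wsum G ≤ 20 * gamma G)
    (hmin : ∀ T : Finset V, T.Nonempty → T ≠ univ →
      20 * gamma (G.induce (↑T : Set V)) < wsum (G.induce (↑T : Set V)))
    {T A : Finset V} (hT : T ≠ univ) (hA : ∀ v ∉ T, v ∈ A ∨ ∃ a ∈ A, G.Adj a v) :
    wsum G ≤ wsum (G.induce (T : Set V)) + 20 * #A := by
  have hH : 20 * gamma (G.induce (T : Set V)) ≤ wsum (G.induce (T : Set V)) := by
    rcases T.eq_empty_or_nonempty with rfl | hne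
    · have : gamma (G.induce ((∅ : Finset V) : Set V)) = 0 :=
        Nat.le_zero.1 (gamma_le_card _ (D := ∅) fun v => absurd v.2 (by simp))
      simp [this]
    · exact (hmin T hne hT).le
  have := gamma_le_gamma_induce_add_card G T A hA
  omega

end Domination

section Weight

variable {V : Type*} (G : SimpleGraph V) [DecidableRel G.Adj]

lemma gdeg_induce (T : Finset V) (w : V) (hw : w ∈ (T : Set V)) :
    gdeg (G.induce (T : Set V)) ⟨w, hw⟩ = #{a ∈ T | G.Adj w a} := by
  have e : (G.induce (T : Set V)).neighborSet ⟨w, hw⟩ ≃ {a : V | a ∈ T ∧ G.Adj w a} :=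
    ⟨fun a => ⟨a.1, a.1.2, a.2⟩, fun a => ⟨⟨a.1, a.2.1⟩, a.2.2⟩, fun _ => rfl, fun _ => rfl⟩
  rw [gdeg, Nat.card_congr e, Nat.card_coe_set_eq, Set.ncard_eq_toFinset_card']
  congr 1
  ext a
  simp

lemma wsum_induce_eq_sum (T : Finset V) :
    wsum (G.induce (T : Set V)) = ∑ w ∈ T, wt #{a ∈ T | G.Adj w a} := by
  rw [wsum, ← sum_coe_sort T]
  exact Fintype.sum_congr _ _ fun w => by rw [gdeg_induce]

variable [Fintype V]

lemma gdeg_eq_degree (v : V) : gdeg G v = G.degree v := by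
  rw [gdeg, Nat.card_eq_fintype_card, card_neighborSet_eq_degree]

lemma card_filter_adj_add_card_filter_adj_compl [DecidableEq V] (T : Finset V) (w : V) :
    #{a ∈ T | G.Adj w a} + #{a ∈ Tᶜ | G.Adj w a} = G.degree w := by
  rw [← card_neighborFinset_eq_degree, neighborFinset_eq_filter, ← card_union_of_disjoint]
  · congr 1
    ext a
    by_cases a ∈ T <;> simp [*]
  · exact disjoint_filter_filter disjoint_compl_right

lemma wsum_induce_add_sum_compl_le [DecidableEq V] (hdeg : ∀ v, G.degree v ≤ 3) (T : Finset V) :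
    wsum (G.induce (T : Set V)) + ∑ d ∈ Tᶜ, wt (G.degree d) ≤
      wsum G + 5 * ∑ d ∈ Tᶜ, #{a ∈ T | G.Adj d a} := by
  have hdouble : ∑ w ∈ T, #{a ∈ Tᶜ | G.Adj w a} = ∑ d ∈ Tᶜ, #{a ∈ T | G.Adj d a} := by
    refine (sum_card_bipartiteAbove_eq_sum_card_bipartiteBelow G.Adj).trans (sum_congr rfl ?_)
    exact fun d _ => congrArg card (filter_congr fun a _ => G.adj_comm a d)
  have hpoint : ∀ w ∈ T, wt #{a ∈ T | G.Adj w a} ≤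
      wt (G.degree w) + 5 * #{a ∈ Tᶜ | G.Adj w a} := fun w _ => by
    have := card_filter_adj_add_card_filter_adj_compl G T w
    have := wt_le_wt_add_of_le (a := #{a ∈ T | G.Adj w a}) (by omega) (hdeg w)
    rwa [show G.degree w - #{a ∈ T | G.Adj w a} = #{a ∈ Tᶜ | G.Adj w a} by omega] at this
  calc wsum (G.induce (T : Set V)) + ∑ d ∈ Tᶜ, wt (G.degree d)
      ≤ ∑ w ∈ T, (wt (G.degree w) + 5 * #{a ∈ Tᶜ | G.Adj w a}) + ∑ d ∈ Tᶜ, wt (G.degree d) := by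
        rw [wsum_induce_eq_sum]
        exact Nat.add_le_add_right (sum_le_sum hpoint) _
    _ = wsum G + 5 * ∑ d ∈ Tᶜ, #{a ∈ T | G.Adj d a} := by
        rw [sum_add_distrib, ← mul_sum, hdouble, add_right_comm, sum_add_sum_compl, wsum]
        simp only [gdeg_eq_degree]

lemma wsum_induce_compl_closedNbhd_add_le [DecidableEq V] (hdeg : ∀ v, G.degree v ≤ 3) (u : V) :
    wsum (G.induce (↑(insert u (G.neighborFinset u))ᶜ : Set V)) + wt (G.degree u) +
        ∑ n ∈ G.neighborFinset u, (wt (G.degree n) + 5) ≤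
      wsum G + 5 * ∑ n ∈ G.neighborFinset u, G.degree n := by
  set N := G.neighborFinset u
  have hu : u ∉ N := G.notMem_neighborFinset_self u
  have hcross_u : #{a ∈ (insert u N)ᶜ | G.Adj u a} = 0 := by
    simp [N, filter_eq_empty_iff]
  have hcross_N : ∀ n ∈ N, #{a ∈ (insert u N)ᶜ | G.Adj n a} + 1 ≤ G.degree n := by
    intro n hn
    have hsplit := card_filter_adj_add_card_filter_adj_compl G (insert u N)ᶜ n
    have hadj_u : 1 ≤ #{a ∈ (insert u N)ᶜᶜ | G.Adj n a} :=
      card_pos.2 ⟨u, by simpa [N, G.adj_comm] using hn⟩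
    omega
  have hdelete := wsum_induce_add_sum_compl_le G hdeg (insert u N)ᶜ
  rw [compl_compl, sum_insert hu, sum_insert hu, hcross_u] at hdelete
  have hcross := sum_le_sum fun n hn => Nat.mul_le_mul_left 5 (hcross_N n hn)
  simp only [mul_add, sum_add_distrib, ← mul_sum, sum_const, smul_eq_mul] at hcross ⊢
  omega

end Weight

lemma exists_neighborFinset_eq_triple {V : Type*} [Fintype V] [DecidableEq V] {G : SimpleGraph V}
    [DecidableRel G.Adj] {u v x : V} (hu : G.degree u = 3) (hv : G.Adj u v) (hx : G.Adj u x)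
    (hvx : v ≠ x) : ∃ y, y ≠ v ∧ y ≠ x ∧ G.neighborFinset u = {v, x, y} := by
  have hv' : v ∈ G.neighborFinset u := (mem_neighborFinset _ _ _).2 hv
  have hx' : x ∈ (G.neighborFinset u).erase v :=
    mem_erase.2 ⟨hvx.symm, (mem_neighborFinset _ _ _).2 hx⟩
  obtain ⟨y, hy⟩ := card_eq_one.1 (show #(((G.neighborFinset u).erase v).erase x) = 1 by
    rw [card_erase_of_mem hx', card_erase_of_mem hv', card_neighborFinset_eq_degree, hu])
  have hy' : y ∈ ((G.neighborFinset u).erase v).erase x := hy ▸ mem_singleton_self y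
  refine ⟨y, ne_of_mem_erase (mem_of_mem_erase hy'), ne_of_mem_erase hy', ?_⟩
  rw [← insert_erase hv', ← insert_erase hx', hy]

theorem no_seq_1_3_2_general {V : Type*} [Fintype V] (G : SimpleGraph V)
    (hdeg : ∀ v : V, gdeg G v ≤ 3)
    (hG : wsum G ≤ 20 * gamma G)
    (hmin : ∀ T : Finset V, T.Nonempty → T ≠ Finset.univ →
      20 * gamma (G.induce (↑T : Set V)) < wsum (G.induce (↑T : Set V))) :
    ¬ ∃ v u x : V, v ≠ x ∧ G.Adj v u ∧ G.Adj u x ∧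
      gdeg G v = 1 ∧ gdeg G u = 3 ∧ gdeg G x = 2 := by
  classical
  rintro ⟨v, u, x, hvx, hvu, hux, hv, hu, hx⟩
  simp only [gdeg_eq_degree] at hdeg hv hu hx
  obtain ⟨y, hyv, hyx, hN⟩ := exists_neighborFinset_eq_triple hu hvu.symm hux hvx
  have hred := wsum_le_wsum_induce_add_of_minimal G hG hmin
    (T := (insert u (G.neighborFinset u))ᶜ) (A := {u})
    (by rw [Ne, compl_eq_univ_iff]; exact insert_ne_empty _ _)
    fun w hw => by simpa [eq_comm, or_iff_not_imp_left] using hw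
  have hsum : ∀ f : V → ℕ, ∑ n ∈ G.neighborFinset u, f n = f v + f x + f y := fun f => by
    rw [hN, sum_insert (by simp [hvx, hyv.symm]), sum_insert (by simp [hyx.symm]),
      sum_singleton, add_assoc]
  have hloss := wsum_induce_compl_closedNbhd_add_le G hdeg u
  rw [hsum, hsum, hv, hu, hx] at hloss
  have hy3 := hdeg y
  simp only [card_singleton] at hred
  interval_cases G.degree y <;> norm_num [wt] at hloss <;> omega

theorem no_seq_1_3_2 {V : Type*} [Fintype V] (G : SimpleGraph V)
    (hdeg : ∀ v : V, gdeg G v ≤ 3)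
    (hgirth : ∀ (v : V) (c : G.Walk v v), c.IsCycle → 8 ≤ c.length)
    (hG : wsum G ≤ 20 * gamma G)
    (hmin : ∀ T : Finset V, T.Nonempty → T ≠ Finset.univ →
      20 * gamma (G.induce (↑T : Set V)) < wsum (G.induce (↑T : Set V))) :
    ¬ ∃ v u x : V, v ≠ x ∧ G.Adj v u ∧ G.Adj u x ∧
      gdeg G v = 1 ∧ gdeg G u = 3 ∧ gdeg G x = 2 :=
  no_seq_1_3_2_general G hdeg hG hmin
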